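/- Let f : Γ → Γ' be a functor between small categories. The left Kan extension along f of the functor Γ → sSet, γ ↦ N(Γ/γ) (the nerve of the over category of objects of Γ over γ), is naturally isomorphic to the functor Γ' → sSet, γ' ↦ N(f/γ'), where f/γ' is the comma category whose objects are pairs (γ, α) of an object γ of Γ and a morphism α : f(γ) → γ' in Γ', and whose morphisms (γ₁, α₁) → (γ₂, α₂) are morphisms γ₁ → γ₂ in Γ commuting with the structure maps to γ'. -/

import Mathlib

/-!
An `n`-simplex of `colim_{(γ, α) ∈ f/γ'} N(Γ/γ)` is represented by a chain in `Γ/γ`, and the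
comparison map pushes it forward along `α` to a chain in `f/γ'`. Conversely, a chain
`c₀ → ⋯ → cₙ` in `f/γ'` lifts canonically to a chain in `Γ/cₙ.left` whose pushforward along
`cₙ.hom` is the chain itself. Every representative `(γ, α, e)` is the image of the canonical
lift of its pushforward under the morphism `(eₙ.left, f eₙ.hom ≫ α) ⟶ (γ, α)` of `f/γ'`, so these
canonical lifts pick one representative per class, and the pushforward is a colimit cocone in
each simplicial degree: `γ' ↦ N(f/γ')` is a pointwise left Kan extension.
-/

open CategoryTheory Limits Opposite

universe v

variable {Γ Γ' : Type v} [SmallCategory Γ] [SmallCategory Γ']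

/-- The functor `γ ↦ N(Γ/γ)` sending an object of `Γ` to the nerve of the over
category `Γ/γ` (realized as the category of costructured arrows of the identity
functor). -/
noncomputable def overNerve (Γ : Type v) [SmallCategory Γ] : Γ ⥤ SSet.{v} :=
  CostructuredArrow.functor (𝟭 Γ) ⋙ nerveFunctor

/-- The functor `γ' ↦ N(f/γ')` sending an object of `Γ'` to the nerve of the comma
category `f/γ'` whose objects are pairs `(γ, α : f γ ⟶ γ')`. -/
noncomputable def commaNerve (f : Γ ⥤ Γ') : Γ' ⥤ SSet.{v} :=
  CostructuredArrow.functor f ⋙ nerveFunctor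

namespace CategoryTheory

namespace CostructuredArrow

variable {J C D : Type*} [Category J] [Category C] [Category D] {F : C ⥤ D} {X : D}

lemma obj_ext_of_heq {A B : CostructuredArrow F X} (hl : A.left = B.left) (hh : A.hom ≍ B.hom) :
    A = B := by
  obtain ⟨_, ⟨⟨⟩⟩, _⟩ := A
  obtain ⟨_, ⟨⟨⟩⟩, _⟩ := B
  cases hl
  cases hh
  rfl

lemma functor_ext {G G' : J ⥤ CostructuredArrow F X} (h : G ⋙ proj F X = G' ⋙ proj F X)
    (hhom : ∀ j, (G.obj j).hom ≍ (G'.obj j).hom) : G = G' :=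
  Functor.ext (fun j => obj_ext_of_heq (Functor.congr_obj h j) (hhom j)) (fun i j u => by
    ext
    have hu := Functor.congr_hom h u
    simp only [Functor.comp_map, proj_map] at hu
    simp only [comp_left, eqToHom_left]
    exact hu)

/-- `post (𝟭 C) F x`, with its target `CostructuredArrow (𝟭 C ⋙ F) (F.obj x)` retyped as
`CostructuredArrow F (F.obj x)` so that it composes with `map` on `F`-costructured arrows. -/
def idPost (F : C ⥤ D) (x : C) : CostructuredArrow (𝟭 C) x ⥤ CostructuredArrow F (F.obj x) :=
  post (𝟭 C) F x

lemma map_comp_idPost (F : C ⥤ D) {x y : C} (g : x ⟶ y) :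
    map g ⋙ idPost F y = idPost F x ⋙ map (F.map g) :=
  functor_ext rfl (fun _ => heq_of_eq (F.map_comp _ _))

end CostructuredArrow

def Limits.Types.isColimitOfSection {J : Type*} [Category J] {K : J ⥤ Type*} (c : Cocone K)
    (σ : c.pt → Σ j, K.obj j) (hσ : ∀ x, c.ι.app (σ x).1 (σ x).2 = x)
    (hmap : ∀ j (y : K.obj j), ∃ u : (σ (c.ι.app j y)).1 ⟶ j, K.map u (σ (c.ι.app j y)).2 = y) :
    IsColimit c where
  desc s := ↾fun x => s.ι.app (σ x).1 (σ x).2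
  fac s j := by
    ext y
    obtain ⟨u, hu⟩ := hmap j y
    conv_rhs => rw [← hu]
    simp
  uniq s m hm := by
    ext x
    simp [← hm, hσ]

namespace ComposableArrows

variable {C D : Type*} [Category C] [Category D] {m : ℕ}

def overLast (G : ComposableArrows C m) :
    ComposableArrows (CostructuredArrow (𝟭 C) (G.obj (Fin.last m))) m :=
  G.toCostructuredArrow (𝟭 C) _ (fun i => G.map (homOfLE (Fin.le_last i)))
    (fun _ => (G.map_comp _ _).symm.trans (congrArg G.map (Subsingleton.elim _ _)))

lemma overLast_comp_map {x : C} (e : ComposableArrows (CostructuredArrow (𝟭 C) x) m) :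
    overLast (e ⋙ CostructuredArrow.proj _ _) ⋙
      CostructuredArrow.map (e.obj (Fin.last m)).hom = e :=
  CostructuredArrow.functor_ext rfl
    (fun i => heq_of_eq (CostructuredArrow.w (e.map (homOfLE (Fin.le_last i)))))

lemma overLast_comp_idPost_comp_map {F : C ⥤ D} {X : D}
    (c : ComposableArrows (CostructuredArrow F X) m) :
    overLast (c ⋙ CostructuredArrow.proj _ _) ⋙ CostructuredArrow.idPost F _ ⋙
      CostructuredArrow.map (c.obj (Fin.last m)).hom = c :=
  CostructuredArrow.functor_ext rfl
    (fun i => heq_of_eq (CostructuredArrow.w (c.map (homOfLE (Fin.le_last i)))))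

end ComposableArrows

end CategoryTheory

noncomputable def overNerveToCommaNerve (f : Γ ⥤ Γ') : overNerve Γ ⟶ f ⋙ commaNerve f where
  app γ := nerveMap (CostructuredArrow.idPost f γ)
  naturality _ _ g := congrArg nerveMap (CostructuredArrow.map_comp_idPost f g)

noncomputable def isColimitCoconeAtOverNerveToCommaNerve (f : Γ ⥤ Γ') (γ' : Γ')
    (Δ : SimplexCategoryᵒᵖ) :
    IsColimit (((evaluation SimplexCategoryᵒᵖ (Type v)).obj Δ).mapCocone
      ((Functor.LeftExtension.mk (commaNerve f) (overNerveToCommaNerve f)).coconeAt γ')) :=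
  Types.isColimitOfSection _
    (fun c => ⟨c.obj (Fin.last _), ComposableArrows.overLast (c ⋙ CostructuredArrow.proj _ _)⟩)
    ComposableArrows.overLast_comp_idPost_comp_map
    (fun _ e => ⟨CostructuredArrow.homMk (e.obj (Fin.last _)).hom rfl,
      ComposableArrows.overLast_comp_map e⟩)

/-- The left Kan extension of `γ ↦ N(Γ/γ)` along `f` is the functor `γ' ↦ N(f/γ')`. -/
theorem lan_overNerve_iso_commaNerve (f : Γ ⥤ Γ') :
    Nonempty (f.lan.obj (overNerve Γ) ≅ commaNerve f) := by
  have : (commaNerve f).IsLeftKanExtension (overNerveToCommaNerve f) :=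
    Functor.LeftExtension.IsPointwiseLeftKanExtension.isLeftKanExtension fun γ' =>
      evaluationJointlyReflectsColimits _ (isColimitCoconeAtOverNerveToCommaNerve f γ')
  exact ⟨Functor.leftKanExtensionUnique _ (f.lanUnit.app (overNerve Γ)) _ (overNerveToCommaNerve f)⟩
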